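/- arXiv:2112.07524 — 3 statements merged into one kernel-verified Lean document; each statement's English description precedes it below -/
import Mathlib

section
/- A graph G has edge-treewidth at most 1 if and only if G is a forest. -/
open Classical

/-- A finite loopless multigraph: a finite vertex type, a finite edge type, and an
endpoint function assigning to every edge an unordered pair of distinct vertices. -/
structure FinMGraph where
  V : Type
  E : Type
  [fV : Fintype V]
  [fE : Fintype E]
  [dV : DecidableEq V]
  ends : E → Sym2 V
  loopless : ∀ e, ¬ (ends e).IsDiag

attribute [instance] FinMGraph.fV FinMGraph.fE FinMGraph.dV

namespace FinMGraph

variable (G : FinMGraph)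

/-- One-step adjacency inside the vertex set `S` (i.e. in the induced subgraph `G[S]`). -/
def stepIn (S : Set G.V) (a b : G.V) : Prop :=
  a ∈ S ∧ b ∈ S ∧ ∃ e : G.E, G.ends e = s(a, b)

/-- The vertex set of the connected component of `v` in the induced subgraph `G[S]`. -/
def comp (S : Set G.V) (v : G.V) : Set G.V :=
  {w | Relation.ReflTransGen (G.stepIn S) v w}

/-- The number of edges (counted with multiplicity) with exactly one endpoint in `X`. -/
noncomputable def cut (X : Set G.V) : ℕ :=
  Nat.card {e : G.E // ∃ a b, G.ends e = s(a, b) ∧ a ∈ X ∧ b ∉ X}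

/-- For a layout `L` (a linear ordering of the vertices) the set `S_i` of vertices
occurring at position `i` or later. -/
def tail (L : Fin (Fintype.card G.V) ≃ G.V) (i : Fin (Fintype.card G.V)) : Set G.V :=
  {v | i ≤ L.symm v}

/-- The cost `δ^ec(i) = |E_G(C_G(S_i, x_i))|` of position `i` in the layout `L`. -/
noncomputable def cost (L : Fin (Fintype.card G.V) ≃ G.V) (i : Fin (Fintype.card G.V)) : ℕ :=
  G.cut (G.comp (G.tail L i) (L i))

/-- The edge-treewidth of `G`: the minimum over all layouts of the maximum cost. -/
noncomputable def etw : ℕ :=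
  sInf {k | ∃ L : Fin (Fintype.card G.V) ≃ G.V, ∀ i, G.cost L i ≤ k}

end FinMGraph

namespace FinMGraph

variable (G : FinMGraph)

/-- `G` is a forest: every edge is a bridge, i.e. after removing an edge its two
endpoints are no longer connected. -/
def IsForest : Prop :=
  ∀ (e : G.E) (a b : G.V), G.ends e = s(a, b) →
    ¬ Relation.ReflTransGen (fun x y => ∃ f : G.E, f ≠ e ∧ G.ends f = s(x, y)) a b

/-- A cycle of length `k` in `G`, given by an injective cyclic sequence of vertices and an
injective sequence of distinct edges joining consecutive vertices. -/
def IsCycleOn (k : ℕ) (v : ZMod k → G.V) (f : ZMod k → G.E) : Prop :=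
  2 ≤ k ∧ Function.Injective v ∧ Function.Injective f ∧
    ∀ i : ZMod k, G.ends (f i) = s(v i, v (i + 1))

/-- `G` is a cactus: every edge belongs to at most one cycle, i.e. any two cycles
sharing an edge have the same edge set. -/
def IsCactus : Prop :=
  ∀ (k₁ : ℕ) (v₁ : ZMod k₁ → G.V) (f₁ : ZMod k₁ → G.E)
    (k₂ : ℕ) (v₂ : ZMod k₂ → G.V) (f₂ : ZMod k₂ → G.E),
    G.IsCycleOn k₁ v₁ f₁ → G.IsCycleOn k₂ v₂ f₂ →
    (∃ e, e ∈ Set.range f₁ ∧ e ∈ Set.range f₂) → Set.range f₁ = Set.range f₂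

/-- A walk from `a` to `b` using the listed edges, in order. -/
inductive Walk : G.V → G.V → List G.E → Prop
  | nil (v : G.V) : Walk v v []
  | cons {a b c : G.V} {e : G.E} {es : List G.E} :
      G.ends e = s(a, b) → Walk b c es → Walk a c (e :: es)

/-- `H` is a subgraph of `G`. -/
def IsSubgraphOf (H : FinMGraph) : Prop :=
  ∃ (φ : H.V ↪ G.V) (ψ : H.E ↪ G.E), ∀ e, G.ends (ψ e) = (H.ends e).map φ

/-- The edge-degree of `v`: the number of incident edges, counted with multiplicity. -/
noncomputable def edeg (v : G.V) : ℕ :=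
  Nat.card {e : G.E // v ∈ G.ends e}

/-- The vertex-degree of `v`: the number of distinct neighbours of `v`. -/
noncomputable def vdeg (v : G.V) : ℕ :=
  Nat.card {w : G.V // w ≠ v ∧ ∃ e : G.E, G.ends e = s(v, w)}

/-- `H` is obtained from `G` by contracting one edge `e = {x,y}` whose endpoints both
have vertex-degree two and edge-degree two. -/
def ContractStep (H : FinMGraph) : Prop :=
  ∃ (x y : G.V) (e : G.E), G.ends e = s(x, y) ∧
    G.vdeg x = 2 ∧ G.edeg x = 2 ∧ G.vdeg y = 2 ∧ G.edeg y = 2 ∧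
    ∃ (φ : G.V → H.V) (ψ : {f : G.E // f ≠ e} ≃ H.E),
      Function.Surjective φ ∧
      (∀ v w : G.V, φ v = φ w ↔ (v = w ∨ (v = x ∧ w = y) ∨ (v = y ∧ w = x))) ∧
      ∀ f : {f : G.E // f ≠ e}, H.ends (ψ f) = (G.ends f.1).map φ

/-- `H` is a weak topological minor of `G`: `H` is obtained from a subgraph of `G` by
repeatedly contracting edges whose endpoints have vertex-degree two and edge-degree two. -/
def IsWeakTopMinorOf (H G : FinMGraph) : Prop :=
  ∃ S : FinMGraph, S.IsSubgraphOf G ∧ Relation.ReflTransGen FinMGraph.ContractStep S H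

/-- The induced subgraph `G[S]` is connected. -/
def ConnectedOn (S : Set G.V) : Prop :=
  ∀ a ∈ S, ∀ b ∈ S, Relation.ReflTransGen (G.stepIn S) a b

/-- `G` is connected. -/
def Connected : Prop := G.ConnectedOn Set.univ

/-- `G` is biconnected: nonempty and removing any single vertex leaves it connected. -/
def Biconnected : Prop :=
  Nonempty G.V ∧ ∀ v : G.V, G.ConnectedOn {w | w ≠ v}

/-- The minimum cost over layouts whose first vertex is `u`. -/
noncomputable def etwFrom (u : G.V) : ℕ :=
  sInf {k | ∃ L : Fin (Fintype.card G.V) ≃ G.V, (L.symm u : ℕ) = 0 ∧ ∀ i, G.cost L i ≤ k}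

/-- The sub-multigraph of `G` on the same vertex set whose edges are those in `F`. -/
noncomputable def restrictE (F : Set G.E) : FinMGraph :=
  { V := G.V, E := {e : G.E // e ∈ F}, ends := fun e => G.ends e.1,
    loopless := fun e => G.loopless e.1 }

/-- Two edges lie in a common block: they are equal or some cycle contains both. -/
def SameBlock (e f : G.E) : Prop :=
  e = f ∨ ∃ (k : ℕ) (v : ZMod k → G.V) (g : ZMod k → G.E),
    G.IsCycleOn k v g ∧ e ∈ Set.range g ∧ f ∈ Set.range g

/-- The block of `G` containing the edge `e`. -/
noncomputable def blockOf (e : G.E) : FinMGraph :=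
  G.restrictE {f | G.SameBlock e f}

/-- The number of vertices outside `X` having a neighbour in `X`. -/
noncomputable def ncut (X : Set G.V) : ℕ :=
  Nat.card {v : G.V // v ∉ X ∧ ∃ x ∈ X, ∃ e : G.E, G.ends e = s(v, x)}

/-- Treewidth, via its layout characterization: the minimum over layouts of the
maximum of `|N_G(C_G(S_i, x_i))|`. -/
noncomputable def twl : ℕ :=
  sInf {k | ∃ L : Fin (Fintype.card G.V) ≃ G.V,
    ∀ i, G.ncut (G.comp (G.tail L i) (L i)) ≤ k}

/-- The maximum edge-degree of `G`. -/
noncomputable def maxEdeg : ℕ :=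
  sSup {m | ∃ v : G.V, m = G.edeg v}

end FinMGraph

/-- A tree-layout of `G`: a rooted tree (given by a parent function under which every
node eventually reaches the root) together with an injective mapping `τ` of the vertices
of `G` into the nodes such that the endpoints of every edge are mapped to comparable
(ancestor/descendant) nodes. -/
structure TreeLayout (G : FinMGraph) where
  T : Type
  par : T → T
  root : T
  par_root : par root = root
  reaches_root : ∀ t : T, ∃ n : ℕ, par^[n] t = root
  τ : G.V → T
  inj : Function.Injective τ
  comparable : ∀ (e : G.E) (a b : G.V), G.ends e = s(a, b) →
    (∃ n : ℕ, par^[n] (τ a) = τ b) ∨ (∃ n : ℕ, par^[n] (τ b) = τ a)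

/-- The set `X_T(u)` of vertices of `G` mapped to descendants of the node `u`. -/
def TreeLayout.region {G : FinMGraph} (TL : TreeLayout G) (u : TL.T) : Set G.V :=
  {x | ∃ n : ℕ, TL.par^[n] (TL.τ x) = u}

/-- The theta graph `θ k`: two vertices joined by `k` parallel edges. -/
def theta (k : ℕ) : FinMGraph :=
  { V := Fin 2, E := Fin k, ends := fun _ => s((0 : Fin 2), 1),
    loopless := fun _ => by rw [Sym2.mk_isDiag_iff]; decide }

/-- The cycle on `n ≥ 2` vertices. -/
def cyc (n : ℕ) (h : 2 ≤ n) : FinMGraph :=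
  letI : NeZero n := ⟨by omega⟩
  letI : Fact (1 < n) := ⟨h⟩
  { V := ZMod n, E := ZMod n, ends := fun i => s(i, i + 1),
    loopless := fun i => by
      rw [Sym2.mk_isDiag_iff]
      exact fun hh => one_ne_zero (left_eq_add.mp hh) }

/-- The multigraph `Z_n^3`, obtained from the cycle on `n ≥ 2` vertices by doubling
every edge. -/
def Z3 (n : ℕ) (h : 2 ≤ n) : FinMGraph :=
  letI : NeZero n := ⟨by omega⟩
  letI : Fact (1 < n) := ⟨h⟩
  { V := ZMod n, E := ZMod n × Fin 2, ends := fun p => s(p.1, p.1 + 1),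
    loopless := fun p => by
      rw [Sym2.mk_isDiag_iff]
      exact fun hh => one_ne_zero (left_eq_add.mp hh) }

/-! If a vertex `t` has two edges into a connected set `U` of vertices placed after it, then at
the position of the earliest vertex of `U` the component contains `U` but not `t`, so the cost
there is at least 2. Two parallel edges, or a cycle read from its earliest vertex, give such a
configuration, so a layout of cost at most 1 forces a forest.

Conversely, lay out a forest by increasing distance from a fixed root of each component. Then
every prefix meets each tree in a connected set, so two edges leaving a component of the
corresponding suffix could be joined through the prefix, closing a cycle. -/

namespace FinMGraph

open Relation

variable {G : FinMGraph}

def adjGraph (G : FinMGraph) : SimpleGraph G.V where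
  Adj x y := ∃ e, G.ends e = s(x, y)
  symm := ⟨fun _ _ ⟨e, he⟩ => ⟨e, he.trans Sym2.eq_swap⟩⟩
  loopless := ⟨fun _ ⟨e, he⟩ => G.loopless e (he ▸ Sym2.mk_isDiag_iff.mpr rfl)⟩

def Crosses (X : Set G.V) (e : G.E) : Prop :=
  ∃ a b, G.ends e = s(a, b) ∧ a ∈ X ∧ b ∉ X

def AdjAvoiding (e : G.E) (x y : G.V) : Prop :=
  ∃ f, f ≠ e ∧ G.ends f = s(x, y)

lemma ne_of_ends_eq {e : G.E} {a b : G.V} (he : G.ends e = s(a, b)) : a ≠ b := fun hab =>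
  G.loopless e (he ▸ Sym2.mk_isDiag_iff.mpr hab)

instance stepIn_symm (S : Set G.V) : Std.Symm (G.stepIn S) :=
  ⟨fun _ _ ⟨ha, hb, e, he⟩ => ⟨hb, ha, e, he.trans Sym2.eq_swap⟩⟩

lemma reflTransGen_stepIn_symm {S : Set G.V} {a b : G.V} (h : ReflTransGen (G.stepIn S) a b) :
    ReflTransGen (G.stepIn S) b a :=
  symm h

lemma mem_of_reflTransGen_stepIn {S : Set G.V} {a b : G.V} (h : ReflTransGen (G.stepIn S) a b)
    (ha : a ∈ S) : b ∈ S := by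
  induction h with
  | refl => exact ha
  | tail _ hstep _ => exact hstep.2.1

lemma comp_subset {S : Set G.V} {x : G.V} (hx : x ∈ S) : G.comp S x ⊆ S :=
  fun _ h => mem_of_reflTransGen_stepIn h hx

lemma reachable_of_reflTransGen_stepIn {S : Set G.V} {a b : G.V}
    (h : ReflTransGen (G.stepIn S) a b) : G.adjGraph.Reachable a b :=
  (SimpleGraph.reachable_iff_reflTransGen a b).mpr (ReflTransGen.mono (fun _ _ hs => hs.2.2) _ _ h)

lemma adjAvoiding_of_stepIn {S : Set G.V} {e : G.E} {a b : G.V} (he : G.ends e = s(a, b))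
    (hb : b ∉ S) {x y : G.V} (h : G.stepIn S x y) : G.AdjAvoiding e x y := by
  obtain ⟨hx, hy, f, hf⟩ := h
  refine ⟨f, ?_, hf⟩
  rintro rfl
  rcases Sym2.eq_iff.mp (he.symm.trans hf) with ⟨-, rfl⟩ | ⟨-, rfl⟩
  exacts [hb hy, hb hx]

lemma cut_le_one_iff {X : Set G.V} :
    G.cut X ≤ 1 ↔ ∀ f₁ f₂, G.Crosses X f₁ → G.Crosses X f₂ → f₁ = f₂ :=
  Finite.card_le_one_iff_subsingleton.trans
    ⟨fun h f₁ f₂ h₁ h₂ => congrArg Subtype.val (h.elim ⟨f₁, h₁⟩ ⟨f₂, h₂⟩),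
      fun h => ⟨fun x y => Subtype.ext (h _ _ x.2 y.2)⟩⟩

lemma etw_le_iff {k : ℕ} : G.etw ≤ k ↔ ∃ L, ∀ i, G.cost L i ≤ k := by
  refine ⟨fun h => ?_, fun ⟨L, hL⟩ => Nat.sInf_le ⟨L, hL⟩⟩
  have hne : {k | ∃ L, ∀ i, G.cost L i ≤ k}.Nonempty :=
    ⟨_, (Fintype.equivFin G.V).symm, fun i => Finset.le_sup (Finset.mem_univ i)⟩
  obtain ⟨L, hL⟩ := Nat.sInf_mem hne
  exact ⟨L, fun i => (hL i).trans h⟩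

lemma cut_comp_le_one_of_isForest (hF : G.IsForest) {S : Set G.V} {x : G.V} (hx : x ∈ S)
    (hS : ∀ y₁ ∉ S, ∀ y₂ ∉ S, G.adjGraph.Reachable y₁ y₂ → ReflTransGen (G.stepIn Sᶜ) y₁ y₂) :
    G.cut (G.comp S x) ≤ 1 := by
  rw [cut_le_one_iff]
  rintro f₁ f₂ ⟨c₁, y₁, hf₁, hc₁, hy₁⟩ ⟨c₂, y₂, hf₂, hc₂, hy₂⟩
  by_contra hne
  have hyS : ∀ {c y : G.V} {f : G.E}, G.ends f = s(c, y) → c ∈ G.comp S x → y ∉ G.comp S x →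
      y ∉ S := fun hf hc hy hyS => hy (hc.tail ⟨comp_subset hx hc, hyS, _, hf⟩)
  have hc₁₂ : ReflTransGen (G.stepIn S) c₁ c₂ := (reflTransGen_stepIn_symm hc₁).trans hc₂
  have hy₂₁ : ReflTransGen (G.stepIn Sᶜ) y₂ y₁ := by
    refine hS y₂ (hyS hf₂ hc₂ hy₂) y₁ (hyS hf₁ hc₁ hy₁) ?_
    have h₁ : G.adjGraph.Adj c₁ y₁ := ⟨f₁, hf₁⟩
    have h₂ : G.adjGraph.Adj c₂ y₂ := ⟨f₂, hf₂⟩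
    exact h₂.reachable.symm.trans ((reachable_of_reflTransGen_stepIn hc₁₂).symm.trans h₁.reachable)
  -- `c₁ ⇝ c₂` inside the component, across `f₂`, then `y₂ ⇝ y₁` outside `S`: a cycle through `f₁`.
  refine hF f₁ c₁ y₁ hf₁ (((ReflTransGen.mono ?_ _ _ hc₁₂).tail ⟨f₂, Ne.symm hne, hf₂⟩).trans
    (ReflTransGen.mono ?_ _ _ hy₂₁))
  · exact fun _ _ => adjAvoiding_of_stepIn hf₁ (hyS hf₁ hc₁ hy₁)
  · exact fun _ _ => adjAvoiding_of_stepIn (hf₁.trans Sym2.eq_swap)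
      (not_not.mpr (comp_subset hx hc₁))

noncomputable def root (G : FinMGraph) (v : G.V) : G.V :=
  (G.adjGraph.connectedComponentMk v).out

noncomputable def depth (G : FinMGraph) (v : G.V) : ℕ :=
  G.adjGraph.dist (G.root v) v

lemma reachable_root (v : G.V) : G.adjGraph.Reachable (G.root v) v :=
  SimpleGraph.ConnectedComponent.exact (Quot.out_eq _)

lemma root_eq_of_reachable {u v : G.V} (h : G.adjGraph.Reachable u v) : G.root u = G.root v :=
  congrArg Quot.out (SimpleGraph.ConnectedComponent.sound h)

lemma root_eq_of_depth_eq_zero {v : G.V} (h : G.depth v = 0) : G.root v = v :=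
  (reachable_root v).dist_eq_zero_iff.mp h

lemma exists_adj_depth_lt {v : G.V} (h : 0 < G.depth v) :
    ∃ w, G.adjGraph.Adj w v ∧ G.depth w < G.depth v := by
  have hne : v ≠ G.root v := fun hv => h.ne' (by rw [depth, ← hv, SimpleGraph.dist_self])
  obtain ⟨p, hp⟩ := (reachable_root v).symm.exists_walk_length_eq_dist
  obtain ⟨w, hadj, q, rfl⟩ := SimpleGraph.Walk.exists_eq_cons_of_ne hne p
  refine ⟨w, hadj.symm, ?_⟩
  have hq := G.adjGraph.dist_le q
  rw [SimpleGraph.Walk.length_cons] at hp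
  rw [depth, depth, ← root_eq_of_reachable hadj.reachable,
    G.adjGraph.dist_comm (u := G.root v) (v := w), G.adjGraph.dist_comm (u := G.root v) (v := v)]
  omega

lemma reflTransGen_root_of_depth_lt_closed {P : Set G.V}
    (hP : ∀ y ∈ P, ∀ w, G.depth w < G.depth y → w ∈ P) {y : G.V} (hy : y ∈ P) :
    ReflTransGen (G.stepIn P) (G.root y) y := by
  induction hd : G.depth y using Nat.strong_induction_on generalizing y with
  | _ n ih =>
    rcases Nat.eq_zero_or_pos n with rfl | hpos
    · rw [root_eq_of_depth_eq_zero hd]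
    · obtain ⟨w, ⟨e, he⟩, hw⟩ := exists_adj_depth_lt (hd ▸ hpos)
      have hwP := hP y hy w hw
      rw [← root_eq_of_reachable (SimpleGraph.Adj.reachable ⟨e, he⟩)]
      exact (ih _ (hd ▸ hw) hwP rfl).tail ⟨hwP, hy, e, he⟩

lemma exists_layout_monotone_depth (G : FinMGraph) :
    ∃ L : Fin (Fintype.card G.V) ≃ G.V, Monotone (G.depth ∘ L) :=
  ⟨(Tuple.sort (G.depth ∘ (Fintype.equivFin G.V).symm)).trans (Fintype.equivFin G.V).symm,
    fun _ _ hij => Tuple.monotone_sort (G.depth ∘ (Fintype.equivFin G.V).symm) hij⟩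

lemma depth_lt_closed_compl_tail {L : Fin (Fintype.card G.V) ≃ G.V}
    (hL : Monotone (G.depth ∘ L)) (i : Fin (Fintype.card G.V)) :
    ∀ y ∈ (G.tail L i)ᶜ, ∀ w, G.depth w < G.depth y → w ∈ (G.tail L i)ᶜ := by
  intro y hy w hw hwi
  refine hy (le_trans (α := Fin _) hwi (le_of_not_gt fun h => hw.not_ge ?_))
  simpa using hL h.le

lemma exists_layout_cost_le_one (hF : G.IsForest) : ∃ L, ∀ i, G.cost L i ≤ 1 := by
  obtain ⟨L, hL⟩ := G.exists_layout_monotone_depth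
  refine ⟨L, fun i => cut_comp_le_one_of_isForest hF (by simp [tail]) fun y₁ h₁ y₂ h₂ hr => ?_⟩
  have r₁ := reflTransGen_root_of_depth_lt_closed (depth_lt_closed_compl_tail hL i) h₁
  have r₂ := reflTransGen_root_of_depth_lt_closed (depth_lt_closed_compl_tail hL i) h₂
  rw [root_eq_of_reachable hr] at r₁
  exact (reflTransGen_stepIn_symm r₁).trans r₂

lemma reflTransGen_stepIn_of_mem_support {S : Set G.V} {u w : G.V} (q : G.adjGraph.Walk u w)
    (hS : ∀ x ∈ q.support, x ∈ S) {x : G.V} (hx : x ∈ q.support) :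
    ReflTransGen (G.stepIn S) u x := by
  induction q with
  | nil => exact (List.mem_singleton.mp hx) ▸ .refl
  | cons hadj p ih =>
    simp only [SimpleGraph.Walk.support_cons, List.mem_cons, forall_eq_or_imp] at hS hx
    rcases hx with rfl | hx
    · exact .refl
    · exact .head ⟨hS.1, hS.2 _ p.start_mem_support, hadj⟩ (ih hS.2 hx)

lemma connectedOn_support {u w : G.V} (q : G.adjGraph.Walk u w) :
    G.ConnectedOn {x | x ∈ q.support} := fun _ ha _ hb =>
  (reflTransGen_stepIn_symm (reflTransGen_stepIn_of_mem_support q (fun _ h => h) ha)).trans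
    (reflTransGen_stepIn_of_mem_support q (fun _ h => h) hb)

lemma exists_one_lt_cost {L : Fin (Fintype.card G.V) ≃ G.V} {t : G.V} {U : Set G.V}
    (hU : U.Nonempty) (hconn : G.ConnectedOn U) (hlater : ∀ u ∈ U, L.symm t < L.symm u)
    {f₁ f₂ : G.E} (hne : f₁ ≠ f₂) (h₁ : ∃ u ∈ U, G.ends f₁ = s(u, t))
    (h₂ : ∃ u ∈ U, G.ends f₂ = s(u, t)) : ∃ i, 1 < G.cost L i := by
  obtain ⟨t', ht'U, ht'min⟩ := U.exists_min_image L.symm U.toFinite hU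
  set C := G.comp (G.tail L (L.symm t')) (L (L.symm t')) with hC
  have hUT : U ⊆ G.tail L (L.symm t') := ht'min
  have hUC : U ⊆ C := fun u hu => by
    rw [hC, Equiv.apply_symm_apply]
    exact ReflTransGen.mono (fun _ _ ⟨ha, hb, he⟩ => ⟨hUT ha, hUT hb, he⟩) _ _ (hconn t' ht'U u hu)
  have htC : t ∉ C := fun ht => (hlater t' ht'U).not_ge (comp_subset (by simp [tail]) ht)
  have hcross : ∀ f, (∃ u ∈ U, G.ends f = s(u, t)) → G.Crosses C f :=
    fun _ ⟨u, hu, hf⟩ => ⟨u, t, hf, hUC hu, htC⟩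
  exact ⟨L.symm t', lt_of_not_ge fun hle =>
    hne (cut_le_one_iff.mp hle f₁ f₂ (hcross f₁ h₁) (hcross f₂ h₂))⟩

lemma ends_ne_of_cost_le_one {L : Fin (Fintype.card G.V) ≃ G.V} (hL : ∀ i, G.cost L i ≤ 1)
    {e f : G.E} (hef : e ≠ f) {a b : G.V} (he : G.ends e = s(a, b)) : G.ends f ≠ s(a, b) := by
  intro hf
  wlog hab : L.symm a < L.symm b generalizing a b
  · refine this (he.trans Sym2.eq_swap) (hf.trans Sym2.eq_swap) (lt_of_le_of_ne (not_lt.mp hab) ?_)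
    exact L.symm.injective.ne (ne_of_ends_eq he).symm
  obtain ⟨i, hi⟩ := exists_one_lt_cost (L := L) (U := {b}) (Set.singleton_nonempty b)
    (by rintro _ rfl _ rfl; exact .refl) (by simpa using hab) hef
    ⟨b, rfl, he.trans Sym2.eq_swap⟩ ⟨b, rfl, hf.trans Sym2.eq_swap⟩
  exact (hi.trans_le (hL i)).false

open SimpleGraph.Walk in
lemma not_isCycle_of_forall_le {L : Fin (Fintype.card G.V) ≃ G.V} (hL : ∀ i, G.cost L i ≤ 1)
    {t : G.V} (c : G.adjGraph.Walk t t) (hmin : ∀ u ∈ c.support, L.symm t ≤ L.symm u) :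
    ¬ c.IsCycle := by
  intro hc
  cases c with
  | nil => exact hc.not_nil Nil.nil
  | @cons _ w _ h p =>
    have h3 := hc.three_le_length
    obtain ⟨hp, -⟩ := (cons_isCycle_iff p h).mp hc
    -- Read the cycle as `t → w ⇝ u → t`; the path `q` from `u` to `w` avoids `t`.
    obtain ⟨u, h', q, hq⟩ := exists_eq_cons_of_ne h.ne p.reverse
    have hq_path := (cons_isPath_iff h' q).mp (hq ▸ hp.reverse)
    have hlen : p.length = q.length + 1 := by rw [← length_reverse, hq, length_cons]
    have huw : u ≠ w := by
      rintro rfl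
      rw [length_eq_zero_iff.mpr (isPath_iff_nil.mp hq_path.1)] at hlen
      simp only [length_cons] at h3
      omega
    have hlater : ∀ x ∈ q.support, L.symm t < L.symm x := fun x hx => by
      refine lt_of_le_of_ne (hmin x ?_) (L.symm.injective.ne fun hxt => hq_path.2 (hxt ▸ hx))
      have hxp : x ∈ p.reverse.support := hq ▸ List.mem_cons_of_mem _ hx
      rw [support_reverse, List.mem_reverse] at hxp
      exact List.mem_cons_of_mem _ hxp
    obtain ⟨f₁, hf₁⟩ := h
    obtain ⟨f₂, hf₂⟩ := h'
    have hne : f₁ ≠ f₂ := by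
      rintro rfl
      exact huw (Sym2.congr_right.mp (hf₂.symm.trans hf₁))
    obtain ⟨i, hi⟩ := exists_one_lt_cost (U := {x | x ∈ q.support}) ⟨u, q.start_mem_support⟩
      (connectedOn_support q) hlater hne ⟨w, q.end_mem_support, hf₁.trans Sym2.eq_swap⟩
      ⟨u, q.start_mem_support, hf₂.trans Sym2.eq_swap⟩
    exact (hi.trans_le (hL i)).false

lemma isAcyclic_adjGraph_of_cost_le_one {L : Fin (Fintype.card G.V) ≃ G.V}
    (hL : ∀ i, G.cost L i ≤ 1) : G.adjGraph.IsAcyclic := by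
  intro v c hc
  obtain ⟨t, htc, htmin⟩ :=
    Set.exists_min_image {x | x ∈ c.support} L.symm (Set.toFinite _) ⟨v, c.start_mem_support⟩
  refine not_isCycle_of_forall_le hL (c.rotate t htc) (fun u hu => htmin u ?_) (hc.rotate htc)
  exact (c.mem_support_rotate_iff t htc).mp hu

lemma isForest_of_isAcyclic
    (hpar : ∀ e f : G.E, e ≠ f → ∀ a b, G.ends e = s(a, b) → G.ends f ≠ s(a, b))
    (hac : G.adjGraph.IsAcyclic) : G.IsForest := by
  intro e a b he hab
  refine SimpleGraph.isBridge_iff.mp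
    (SimpleGraph.isAcyclic_iff_forall_isBridge.mp hac (show G.adjGraph.Adj a b from ⟨e, he⟩)) ?_
  refine (SimpleGraph.reachable_iff_reflTransGen a b).mpr (ReflTransGen.mono ?_ _ _ hab)
  rintro x y ⟨f, hfe, hf⟩
  exact SimpleGraph.deleteEdges_adj.mpr ⟨⟨f, hf⟩, fun hxy => hpar e f hfe.symm a b he (hf.trans hxy)⟩

lemma isForest_of_cost_le_one {L : Fin (Fintype.card G.V) ≃ G.V} (hL : ∀ i, G.cost L i ≤ 1) :
    G.IsForest :=
  isForest_of_isAcyclic (fun _ _ hef _ _ => ends_ne_of_cost_le_one hL hef)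
    (isAcyclic_adjGraph_of_cost_le_one hL)

end FinMGraph

/-- A graph `G` has edge-treewidth at most 1 if and only if `G` is a forest. -/
theorem etw_le_one_iff_isForest (G : FinMGraph) : G.etw ≤ 1 ↔ G.IsForest := by
  rw [FinMGraph.etw_le_iff]
  exact ⟨fun ⟨_, hL⟩ => FinMGraph.isForest_of_cost_le_one hL, FinMGraph.exists_layout_cost_le_one⟩
end

section
/- For every biconnected graph G and every vertex u of G, the minimum over layouts of G starting at u of the δ^ec-cost is at most etw(G)^2 + 2·etw(G). That is, etw(G,u) ≤ etw(G)^2 + 2·etw(G), where etw(G,u) = min{max_i δ^ec_{G,L}(i) : L ∈ L(G), L(1) = u}. -/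
open Classical

/-!
Take a layout `L` of width `k = etw G` and move `u` from its position `p` to the front.
Positions after `p` keep their cost and position `0` costs nothing. At a position `j < p` the
vertex set shrinks from `S_j` to `S_j \ {u}`; an edge leaving the new component `C'` of `x_j`
either leaves the old component `C` or joins `C'` to `u`. An edge `a u` with `a ∉ S_p` leaves
the component of `u` in `G[S_p]`, which has at most `k` boundary edges; an edge `a u` with
`a ∈ S_p` leaves the component `D` of `a` in `G[S_p \ {u}]`, and `D` too has at most `k`
boundary edges since `S_p \ {u}` is a final segment of `L`. Finally, as `G - u` is connected,
every such `D` sends an edge to `x_0 … x_{p-1}`, i.e. out of the component of `u` in `G[S_p]`,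
so there are at most `k` of them: the cost at `j` is at most `k + k + k·k`.
-/

theorem Relation.ReflTransGen.exists_mem_notMem {α : Type*} {r : α → α → Prop} {D : Set α}
    {a b : α} (h : Relation.ReflTransGen r a b) (ha : a ∈ D) (hb : b ∉ D) :
    ∃ x ∈ D, ∃ y ∉ D, r x y := by
  induction h with
  | refl => exact absurd ha hb
  | @tail c d _ hcd ih =>
    by_cases hc : c ∈ D
    · exact ⟨c, hc, d, hb, hcd⟩
    · exact ih hc

theorem Set.ncard_biUnion_le_ncard_mul {ι α : Type*} {t : Set ι} (ht : t.Finite)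
    (s : ι → Set α) {n : ℕ} (h : ∀ i ∈ t, (s i).ncard ≤ n) :
    (⋃ i ∈ t, s i).ncard ≤ t.ncard * n := by
  have hsum := ht.toFinset.set_ncard_biUnion_le s
  simp only [Set.Finite.mem_toFinset] at hsum
  calc (⋃ i ∈ t, s i).ncard ≤ ∑ i ∈ ht.toFinset, (s i).ncard := hsum
    _ ≤ ht.toFinset.card • n := Finset.sum_le_card_nsmul _ _ _ fun i hi => h i (by simpa using hi)
    _ = t.ncard * n := by rw [smul_eq_mul, Set.ncard_eq_toFinset_card t ht]

theorem Fin.coe_cycleRange {n : ℕ} (p a : Fin n) :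
    (p.cycleRange a : ℕ) = if a < p then (a : ℕ) + 1 else if a = p then 0 else (a : ℕ) := by
  rcases lt_trichotomy a p with h | rfl | h
  · rw [Fin.coe_cycleRange_of_lt h, if_pos h]
  · simp [Fin.coe_cycleRange_of_le le_rfl]
  · rw [Fin.cycleRange_of_gt h, if_neg (lt_asymm h), if_neg h.ne']

theorem Fin.cycleRange_le_cycleRange_iff_of_lt {n : ℕ} {p j : Fin n} (h : j < p) (a : Fin n) :
    p.cycleRange j ≤ p.cycleRange a ↔ j ≤ a ∧ a ≠ p := by
  simp only [Fin.le_def, Fin.coe_cycleRange, Fin.lt_def, ne_eq, Fin.ext_iff] at h ⊢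
  split_ifs <;> omega

theorem Fin.cycleRange_le_cycleRange_iff_of_gt {n : ℕ} {p j : Fin n} (h : p < j) (a : Fin n) :
    p.cycleRange j ≤ p.cycleRange a ↔ j ≤ a := by
  simp only [Fin.le_def, Fin.coe_cycleRange, Fin.lt_def, Fin.ext_iff] at h ⊢
  split_ifs <;> omega

namespace FinMGraph

variable {G : FinMGraph}

section Components

variable {S T : Set G.V} {v w : G.V}

theorem stepIn_symm_s9 {a b : G.V} (h : G.stepIn S a b) : G.stepIn S b a :=
  ⟨h.2.1, h.1, h.2.2.imp fun _ he => he.trans Sym2.eq_swap⟩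

instance : Std.Symm (G.stepIn S) := ⟨fun _ _ => stepIn_symm_s9⟩

theorem mem_comp_self : v ∈ G.comp S v := Relation.ReflTransGen.refl

theorem mem_comp_symm (h : w ∈ G.comp S v) : v ∈ G.comp S w :=
  Std.Symm.symm _ _ h

theorem comp_subset_s9 (hv : v ∈ S) : G.comp S v ⊆ S := fun _ hw => by
  induction hw with
  | refl => exact hv
  | tail _ h _ => exact h.2.1

theorem comp_eq_of_mem (h : w ∈ G.comp S v) : G.comp S w = G.comp S v :=
  Set.ext fun _ => ⟨h.trans, (mem_comp_symm h).trans⟩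

theorem comp_mono (hST : S ⊆ T) (v : G.V) : G.comp S v ⊆ G.comp T v :=
  fun w => Relation.ReflTransGen.mono (fun _ _ h => ⟨hST h.1, hST h.2.1, h.2.2⟩) v w

theorem comp_eq_of_comp_subset (hsub : G.comp S v ⊆ T) (hTS : T ⊆ S) :
    G.comp T v = G.comp S v := by
  refine (comp_mono hTS v).antisymm fun w hw => ?_
  induction hw with
  | refl => exact mem_comp_self
  | @tail b c hb hbc ih => exact ih.tail ⟨hsub hb, hsub (hb.tail hbc), hbc.2.2⟩

end Components

def cutEdges (G : FinMGraph) (X : Set G.V) : Set G.E :=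
  {e | ∃ a b, G.ends e = s(a, b) ∧ a ∈ X ∧ b ∉ X}

theorem cut_eq_ncard_cutEdges (X : Set G.V) : G.cut X = (G.cutEdges X).ncard :=
  (Nat.card_coe_set_eq _).symm

theorem cut_le_card (X : Set G.V) : G.cut X ≤ Fintype.card G.E :=
  (Finite.card_subtype_le _).trans_eq Nat.card_eq_fintype_card

theorem cut_comp_univ (v : G.V) : G.cut (G.comp Set.univ v) = 0 := by
  rw [cut_eq_ncard_cutEdges, Set.ncard_eq_zero]
  exact Set.eq_empty_of_forall_notMem fun e ⟨_, _, he, ha, hb⟩ =>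
    hb (ha.tail ⟨trivial, trivial, e, he⟩)

section Boundary

variable {B : Set G.V} {u w z : G.V}

def adjComps (G : FinMGraph) (B : Set G.V) (u : G.V) : Set (Set G.V) :=
  G.comp (B \ {u}) '' {w ∈ B \ {u} | ∃ e, G.ends e = s(u, w)}

theorem exists_edge_comp_diff_singleton_to_compl (hconn : G.ConnectedOn {v | v ≠ u})
    (hw : w ∈ B \ {u}) (hz : z ∉ B) (hzu : z ≠ u) :
    ∃ e a c, G.ends e = s(a, c) ∧ a ∈ G.comp (B \ {u}) w ∧ c ∉ B := by
  have hzD : z ∉ G.comp (B \ {u}) w := fun h => hz (comp_subset_s9 hw h).1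
  obtain ⟨a, ha, c, hc, -, hcu, e, he⟩ :=
    (hconn w hw.2 z hzu).exists_mem_notMem mem_comp_self hzD
  refine ⟨e, a, c, he, ha, fun hcB => hc (ha.tail ⟨comp_subset_s9 hw ha, ⟨hcB, hcu⟩, e, he⟩)⟩

theorem ncard_adjComps_le (hconn : G.ConnectedOn {v | v ≠ u}) (huB : u ∈ B) (hzB : z ∉ B) :
    (G.adjComps B u).ncard ≤ G.cut (G.comp B u) := by
  have hrep : ∀ D : G.adjComps B u, ∀ a ∈ (D : Set G.V), a ∈ B ∧ G.comp (B \ {u}) a = D := by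
    rintro ⟨_, w, hw, rfl⟩ a ha
    exact ⟨(comp_subset_s9 hw.1 ha).1, comp_eq_of_mem ha⟩
  have hexit : ∀ D : G.adjComps B u, ∃ e : G.cutEdges (G.comp B u), ∃ a ∈ (D : Set G.V), ∃ c ∉ B,
      G.ends e = s(a, c) := by
    rintro ⟨_, w, ⟨hw, e₀, he₀⟩, rfl⟩
    obtain ⟨e, a, c, he, ha, hc⟩ :=
      exists_edge_comp_diff_singleton_to_compl hconn hw hzB (ne_of_mem_of_not_mem huB hzB).symm
    have hwu : w ∈ G.comp B u := Relation.ReflTransGen.single ⟨huB, hw.1, e₀, he₀⟩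
    have haC : a ∈ G.comp B u := by
      rw [← comp_eq_of_mem hwu]
      exact comp_mono Set.sdiff_subset w ha
    exact ⟨⟨e, a, c, he, haC, fun h => hc (comp_subset_s9 huB h)⟩, a, ha, c, hc, he⟩
  choose f hf using hexit
  rw [cut_eq_ncard_cutEdges, ← Nat.card_coe_set_eq, ← Nat.card_coe_set_eq]
  refine Nat.card_le_card_of_injective f fun D₁ D₂ hf₁₂ => ?_
  obtain ⟨a₁, ha₁, c₁, hc₁, he₁⟩ := hf D₁
  obtain ⟨a₂, ha₂, c₂, -, he₂⟩ := hf D₂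
  have ha : a₁ = a₂ := by
    rw [hf₁₂, he₂] at he₁
    rcases Sym2.eq_iff.mp he₁ with ⟨h, -⟩ | ⟨h, -⟩
    · exact h.symm
    · exact absurd (h ▸ (hrep D₂ a₂ ha₂).1) hc₁
  exact Subtype.ext ((hrep D₁ a₁ ha₁).2.symm.trans (ha ▸ (hrep D₂ a₂ ha₂).2))

theorem cut_comp_diff_singleton_le {A : Set G.V} {x : G.V} {k : ℕ}
    (hconn : G.ConnectedOn {v | v ≠ u}) (hx : x ∈ A \ {u}) (huB : u ∈ B) (hzB : z ∉ B)
    (hA : G.cut (G.comp A x) ≤ k) (hB : G.cut (G.comp B u) ≤ k)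
    (hT : ∀ w ∈ B \ {u}, G.cut (G.comp (B \ {u}) w) ≤ k) :
    G.cut (G.comp (A \ {u}) x) ≤ k ^ 2 + 2 * k := by
  have hC' : G.comp (A \ {u}) x ⊆ A \ {u} := comp_subset_s9 hx
  have hsplit : G.cutEdges (G.comp (A \ {u}) x) ⊆
      G.cutEdges (G.comp A x) ∪ G.cutEdges (G.comp B u) ∪ ⋃ D ∈ G.adjComps B u, G.cutEdges D := by
    rintro e ⟨a, b, he, ha, hb⟩
    by_cases hbC : b ∈ G.comp A x
    swap
    · exact Or.inl (Or.inl ⟨a, b, he, comp_mono Set.sdiff_subset x ha, hbC⟩)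
    obtain rfl : b = u := by
      by_contra hbu
      exact hb (ha.tail ⟨hC' ha, ⟨comp_subset_s9 hx.1 hbC, hbu⟩, e, he⟩)
    have he' : G.ends e = s(b, a) := he.trans Sym2.eq_swap
    by_cases haB : a ∈ B
    · have haT : a ∈ B \ {b} := ⟨haB, (hC' ha).2⟩
      refine Or.inr (Set.mem_biUnion ⟨a, ⟨haT, e, he'⟩, rfl⟩ ?_)
      exact ⟨a, b, he, mem_comp_self, fun h => (comp_subset_s9 haT h).2 rfl⟩
    · exact Or.inl (Or.inr ⟨b, a, he', mem_comp_self, fun h => haB (comp_subset_s9 huB h)⟩)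
  have hunion : (⋃ D ∈ G.adjComps B u, G.cutEdges D).ncard ≤ k * k := by
    refine (Set.ncard_biUnion_le_ncard_mul (n := k) (Set.toFinite _) _ ?_).trans ?_
    · rintro _ ⟨w, hw, rfl⟩
      exact (cut_eq_ncard_cutEdges _).symm.trans_le (hT w hw.1)
    · exact Nat.mul_le_mul_right k ((ncard_adjComps_le hconn huB hzB).trans hB)
  rw [cut_eq_ncard_cutEdges] at hA hB ⊢
  calc (G.cutEdges (G.comp (A \ {u}) x)).ncard
      ≤ (G.cutEdges (G.comp A x) ∪ G.cutEdges (G.comp B u) ∪ ⋃ D ∈ G.adjComps B u, G.cutEdges D).ncard :=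
        Set.ncard_le_ncard hsplit
    _ ≤ k + k + k * k :=
        (Set.ncard_union_le _ _).trans
          (add_le_add ((Set.ncard_union_le _ _).trans (add_le_add hA hB)) hunion)
    _ = k ^ 2 + 2 * k := by ring

end Boundary

section Layouts

variable {L : Fin (Fintype.card G.V) ≃ G.V} {k : ℕ}

theorem cut_comp_le_of_upClosed (hL : ∀ i, G.cost L i ≤ k) {A : Set G.V}
    (hA : ∀ v ∈ A, ∀ w, L.symm v ≤ L.symm w → w ∈ A) {y : G.V} (hy : y ∈ A) :
    G.cut (G.comp A y) ≤ k := by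
  obtain ⟨w, hw, hmin⟩ :=
    Set.exists_min_image (G.comp A y) L.symm (Set.toFinite _) ⟨y, mem_comp_self⟩
  rw [← comp_eq_of_mem hw] at hmin ⊢
  have hcomp : G.comp (G.tail L (L.symm w)) w = G.comp A w :=
    comp_eq_of_comp_subset hmin fun v hv => hA w (comp_subset_s9 hy hw) v hv
  simpa only [cost, Equiv.apply_symm_apply, hcomp] using hL (L.symm w)

theorem tail_cycleRange_of_lt {p j : Fin (Fintype.card G.V)} (h : j < p) :
    G.tail (p.cycleRange.symm.trans L) (p.cycleRange j) = G.tail L j \ {L p} := by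
  ext v
  simp [tail, Fin.cycleRange_le_cycleRange_iff_of_lt h, ← Equiv.symm_apply_eq]

theorem tail_cycleRange_of_gt {p j : Fin (Fintype.card G.V)} (h : p < j) :
    G.tail (p.cycleRange.symm.trans L) (p.cycleRange j) = G.tail L j := by
  ext v
  simp [tail, Fin.cycleRange_le_cycleRange_iff_of_gt h]

theorem tail_cycleRange_self (p : Fin (Fintype.card G.V)) :
    G.tail (p.cycleRange.symm.trans L) (p.cycleRange p) = Set.univ := by
  ext v
  simp [tail, Fin.le_def, Fin.coe_cycleRange_of_le (le_refl p)]

theorem cost_cycleRange_le (hL : ∀ i, G.cost L i ≤ k) {p : Fin (Fintype.card G.V)}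
    (hconn : G.ConnectedOn {v | v ≠ L p}) (i : Fin (Fintype.card G.V)) :
    G.cost (p.cycleRange.symm.trans L) i ≤ k ^ 2 + 2 * k := by
  obtain ⟨j, rfl⟩ := p.cycleRange.surjective i
  have hLj : (p.cycleRange.symm.trans L) (p.cycleRange j) = L j := by simp
  rw [cost, hLj]
  rcases lt_trichotomy j p with hjp | rfl | hpj
  · have hfirst : (⟨0, j.pos⟩ : Fin _) < p := lt_of_le_of_lt (Nat.zero_le _) hjp
    have hup : ∀ v ∈ G.tail L p \ {L p}, ∀ w, L.symm v ≤ L.symm w → w ∈ G.tail L p \ {L p} := by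
      rintro v ⟨hpv, hvp⟩ w hvw
      refine ⟨le_trans hpv hvw, fun hwp => hvp ?_⟩
      rw [Set.mem_singleton_iff] at hwp ⊢
      exact L.symm_apply_eq.mp (le_antisymm (hvw.trans_eq (by simp [hwp])) hpv)
    rw [tail_cycleRange_of_lt hjp]
    exact cut_comp_diff_singleton_le (z := L ⟨0, j.pos⟩) hconn
      ⟨by simp [tail], L.injective.ne hjp.ne⟩ (by simp [tail]) (by simpa [tail] using hfirst)
      (hL j) (hL p) fun w hw => cut_comp_le_of_upClosed hL hup hw
  · rw [tail_cycleRange_self, cut_comp_univ]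
    exact Nat.zero_le _
  · rw [tail_cycleRange_of_gt hpj]
    exact (hL j).trans (by nlinarith)

end Layouts

theorem exists_cost_le_etw (G : FinMGraph) :
    ∃ L : Fin (Fintype.card G.V) ≃ G.V, ∀ i, G.cost L i ≤ G.etw :=
  Nat.sInf_mem (s := {k | ∃ L : Fin (Fintype.card G.V) ≃ G.V, ∀ i, G.cost L i ≤ k})
    ⟨_, (Fintype.equivFin G.V).symm, fun _ => cut_le_card _⟩

end FinMGraph

/-- For every biconnected graph `G` and every vertex `u` of `G`, the minimum
over layouts of `G` starting at `u` of the `δ^ec`-cost is at most `etw(G)^2 + 2·etw(G)`. -/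
theorem etwFrom_le_of_biconnected (G : FinMGraph) (hG : G.Biconnected) (u : G.V) :
    G.etwFrom u ≤ G.etw ^ 2 + 2 * G.etw := by
  obtain ⟨L, hL⟩ := G.exists_cost_le_etw
  have hconn : G.ConnectedOn {v | v ≠ L (L.symm u)} := by simpa using hG.2 u
  apply Nat.sInf_le
  refine ⟨(L.symm u).cycleRange.symm.trans L, ?_, G.cost_cycleRange_le hL hconn⟩
  simp [Fin.coe_cycleRange_of_le (le_refl (L.symm u))]
end

section
/- For every graph H, etw(H) ≤ tw(H) · Δ_e(H), where tw is treewidth and Δ_e is the maximum edge-degree. -/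
open Classical

/-! Every edge leaving `X` is incident with a vertex of `N(X)`, and each such vertex carries at
most `Δ_e` edges, so `|E(X)| ≤ |N(X)| · Δ_e` for every `X`. Applied to the components of an
optimal treewidth layout, this bounds the cost of that same layout for edge-treewidth. -/

namespace FinMGraph

open Finset

variable (G : FinMGraph)

lemma edeg_le_maxEdeg (v : G.V) : G.edeg v ≤ G.maxEdeg := by
  refine le_csSup ⟨Fintype.card G.E, ?_⟩ ⟨v, rfl⟩
  rintro m ⟨w, rfl⟩
  rw [edeg, Nat.card_eq_fintype_card]
  exact Fintype.card_subtype_le _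

lemma cut_le_ncut_mul_maxEdeg (X : Set G.V) : G.cut X ≤ G.ncut X * G.maxEdeg := by
  set N : Finset G.V := {v | v ∉ X ∧ ∃ x ∈ X, ∃ e : G.E, G.ends e = s(v, x)}
  have hcover : ({e | ∃ a b, G.ends e = s(a, b) ∧ a ∈ X ∧ b ∉ X} : Finset G.E) ⊆
      N.biUnion fun v => {e | v ∈ G.ends e} := by
    intro e he
    simp only [mem_filter, mem_univ, true_and, mem_biUnion, N] at he ⊢
    obtain ⟨a, b, hab, ha, hb⟩ := he
    exact ⟨b, ⟨hb, a, ha, e, hab.trans Sym2.eq_swap⟩, hab ▸ Sym2.mem_mk_right a b⟩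
  calc G.cut X = #({e | ∃ a b, G.ends e = s(a, b) ∧ a ∈ X ∧ b ∉ X} : Finset G.E) := by
        rw [cut, Nat.card_eq_fintype_card, Fintype.card_subtype]
    _ ≤ ∑ v ∈ N, #({e | v ∈ G.ends e} : Finset G.E) :=
        (card_le_card hcover).trans card_biUnion_le
    _ = ∑ v ∈ N, G.edeg v := by
        simp only [edeg, Nat.card_eq_fintype_card, Fintype.card_subtype]
    _ ≤ #N * G.maxEdeg := sum_le_card_nsmul _ _ _ fun v _ => G.edeg_le_maxEdeg v
    _ = G.ncut X * G.maxEdeg := by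
        rw [ncut, Nat.card_eq_fintype_card, Fintype.card_subtype]

lemma ncut_le_card (X : Set G.V) : G.ncut X ≤ Fintype.card G.V := by
  rw [ncut, Nat.card_eq_fintype_card]
  exact Fintype.card_subtype_le _

lemma exists_layout_ncut_le_twl :
    ∃ L : Fin (Fintype.card G.V) ≃ G.V, ∀ i, G.ncut (G.comp (G.tail L i) (L i)) ≤ G.twl :=
  Nat.sInf_mem (s := {k | ∃ L : Fin (Fintype.card G.V) ≃ G.V,
      ∀ i, G.ncut (G.comp (G.tail L i) (L i)) ≤ k})
    ⟨_, (Fintype.equivFin G.V).symm, fun _ => G.ncut_le_card _⟩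

end FinMGraph

/-- For every graph `H`, `etw(H) ≤ tw(H) · Δ_e(H)`, where `tw` is treewidth
(via its layout characterization) and `Δ_e` is the maximum edge-degree. -/
theorem etw_le_twl_mul_maxEdeg (H : FinMGraph) :
    H.etw ≤ H.twl * H.maxEdeg := by
  obtain ⟨L, hL⟩ := H.exists_layout_ncut_le_twl
  exact Nat.sInf_le ⟨L, fun i =>
    (H.cut_le_ncut_mul_maxEdeg _).trans (Nat.mul_le_mul_right _ (hL i))⟩
end
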